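/- arXiv:1809.01805 — 3 statements merged into one kernel-verified Lean document; each statement's English description precedes it below -/
import Mathlib

section
/- Let G be a subcubic graph with a list assignment L with |L(e)| ≥ 10 for all edges, such that G is not strongly L-edge-colorable but every proper subgraph is. Then G contains no triangle. -/
def StrongSees {V : Type*} (G : SimpleGraph V) (e e' : Sym2 V) : Prop :=
  (∃ v, v ∈ e ∧ v ∈ e') ∨ (∃ u v, u ∈ e ∧ v ∈ e' ∧ G.Adj u v)

def IsStrongEdgeColoring {V β : Type*} (G : SimpleGraph V) (c : Sym2 V → β) : Prop :=
  ∀ e ∈ G.edgeSet, ∀ e' ∈ G.edgeSet, e ≠ e' → StrongSees G e e' → c e ≠ c e'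

def StronglyListColorable {V β : Type*} (G : SimpleGraph V) (L : Sym2 V → Finset β) : Prop :=
  ∃ c : Sym2 V → β, IsStrongEdgeColoring G c ∧ ∀ e ∈ G.edgeSet, c e ∈ L e

/-!
Let `xyz` be a triangle. By minimality, `G` without the edges at `x` has a strong `L`-coloring;
every adjacency lost involves `x`, so this coloring is still strong in `G` on the edges avoiding `x`.
The edges at `x` are then colored greedily: the edge `xw` off the triangle (if there is one), then
`xz`, then `xy`.

An edge `uv` sees exactly the edges meeting `S = N(u) ∪ N(v)`. Double counting incidences bounds
their number by `3|S| - e(S)`, and a triangle at `u` gives `e(S) ≥ |S|`, so there are at most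
`2|S|` of them. As `|S| ≤ 6`, and `|S| ≤ 5` when `u` and `v` have a common neighbor, at each step
the edge being colored sees at most `12 - 3`, `10 - 2`, resp. `10 - 1` colored edges: fewer than
the `10` colors on its list.
-/

open Finset

section

variable {V β : Type*} {G : SimpleGraph V} {L : Sym2 V → Finset β}

theorem StrongSees.symm {e e' : Sym2 V} (h : StrongSees G e e') : StrongSees G e' e := by
  rcases h with ⟨v, he, he'⟩ | ⟨u, v, hu, hv, huv⟩
  · exact .inl ⟨v, he', he⟩
  · exact .inr ⟨v, u, hv, hu, huv.symm⟩

/-- The edges of `U` are left uncolored: they carry no list or distinctness constraint. -/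
def StronglyListColorableExcept (G : SimpleGraph V) (L : Sym2 V → Finset β)
    (U : Finset (Sym2 V)) : Prop :=
  ∃ c : Sym2 V → β, (∀ e ∈ G.edgeSet, e ∉ U → c e ∈ L e) ∧
    ∀ e ∈ G.edgeSet, ∀ e' ∈ G.edgeSet, e ∉ U → e' ∉ U → e ≠ e' → StrongSees G e e' → c e ≠ c e'

theorem stronglyListColorableExcept_empty :
    StronglyListColorableExcept G L ∅ ↔ StronglyListColorable G L := by
  simp [StronglyListColorableExcept, StronglyListColorable, IsStrongEdgeColoring, and_comm]

namespace StronglyListColorableExcept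

variable {U U' : Finset (Sym2 V)}

theorem mono (h : StronglyListColorableExcept G L U) (hUU' : U ⊆ U') :
    StronglyListColorableExcept G L U' := by
  obtain ⟨c, hcL, hc⟩ := h
  exact ⟨c, fun e he heU => hcL e he (fun h => heU (hUU' h)),
    fun e he e' he' heU he'U => hc e he e' he' (fun h => heU (hUU' h)) (fun h => he'U (hUU' h))⟩

theorem erase [DecidableEq V] (h : StronglyListColorableExcept G L U) {e : Sym2 V}
    (F : Finset (Sym2 V)) (hF : ∀ e' ∈ G.edgeSet, e' ∉ U → StrongSees G e e' → e' ∈ F)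
    (hcard : #F < #(L e)) : StronglyListColorableExcept G L (U.erase e) := by
  classical
  obtain ⟨c, hcL, hc⟩ := h
  obtain ⟨b, hbL, hbF⟩ := exists_mem_notMem_of_card_lt_card (card_image_le.trans_lt hcard)
  have hb : ∀ e' ∈ G.edgeSet, e' ∉ U.erase e → e' ≠ e → StrongSees G e e' → b ≠ c e' :=
    fun e' he' he'U hne hsees hbe =>
      hbF (mem_image.2 ⟨e', hF e' he' (fun h => he'U (mem_erase.2 ⟨hne, h⟩)) hsees, hbe.symm⟩)
  refine ⟨Function.update c e b, fun e₁ he₁ he₁U => ?_, fun e₁ he₁ e₂ he₂ he₁U he₂U hne hs => ?_⟩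
  · by_cases h₁ : e₁ = e
    · subst h₁; simpa using hbL
    · simpa [h₁] using hcL e₁ he₁ (fun h => he₁U (mem_erase.2 ⟨h₁, h⟩))
  · by_cases h₁ : e₁ = e
    · subst h₁
      simpa [Ne.symm hne] using hb e₂ he₂ he₂U (Ne.symm hne) hs
    by_cases h₂ : e₂ = e
    · subst h₂
      simpa [hne] using (hb e₁ he₁ he₁U hne hs.symm).symm
    simpa [h₁, h₂] using hc e₁ he₁ e₂ he₂ (fun h => he₁U (mem_erase.2 ⟨h₁, h⟩))
      (fun h => he₂U (mem_erase.2 ⟨h₂, h⟩)) hne hs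

end StronglyListColorableExcept

/-- Deleting the edges at `x` only removes adjacencies that involve `x`, so a strong coloring of
`G.deleteIncidenceSet x` stays strong in `G` on the edges avoiding `x`. -/
theorem StronglyListColorable.except_incidenceFinset [DecidableEq V] {x : V}
    [Fintype (G.neighborSet x)] (h : StronglyListColorable (G.deleteIncidenceSet x) L) :
    StronglyListColorableExcept G L (G.incidenceFinset x) := by
  obtain ⟨c, hc, hcL⟩ := h
  have hx : ∀ e ∈ G.edgeSet, e ∉ G.incidenceFinset x → x ∉ e := fun e he heU hxe =>
    heU ((G.mem_incidenceFinset x e).2 ⟨he, hxe⟩)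
  have hdel : ∀ e ∈ G.edgeSet, e ∉ G.incidenceFinset x → e ∈ (G.deleteIncidenceSet x).edgeSet :=
    fun e he heU => by
      rw [SimpleGraph.edgeSet_deleteIncidenceSet]
      exact ⟨he, fun h => hx e he heU h.2⟩
  refine ⟨c, fun e he heU => hcL e (hdel e he heU), fun e he e' he' heU he'U hne hs => ?_⟩
  refine hc e (hdel e he heU) e' (hdel e' he' he'U) hne ?_
  rcases hs with hs | ⟨u, v, hu, hv, huv⟩
  · exact .inl hs
  · refine .inr ⟨u, v, hu, hv, SimpleGraph.deleteIncidenceSet_adj.2 ⟨huv, ?_, ?_⟩⟩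
    · rintro rfl; exact hx e he heU hu
    · rintro rfl; exact hx e' he' he'U hv

namespace SimpleGraph

variable [Fintype V] [DecidableEq V] [DecidableRel G.Adj]

variable (G) in
def edgesMeeting (S : Finset V) : Finset (Sym2 V) := {e ∈ G.edgeFinset | ∃ a ∈ S, a ∈ e}

theorem mem_edgesMeeting_of_strongSees {u v : V} {e : Sym2 V} (huv : G.Adj u v)
    (he : e ∈ G.edgeSet) (hs : StrongSees G s(u, v) e) :
    e ∈ G.edgesMeeting (G.neighborFinset u ∪ G.neighborFinset v) := by
  simp only [edgesMeeting, mem_filter, mem_edgeFinset, mem_union, mem_neighborFinset]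
  refine ⟨he, ?_⟩
  rcases hs with ⟨w, hw, hwe⟩ | ⟨p, w, hp, hwe, hpw⟩
  · rcases Sym2.mem_iff.1 hw with rfl | rfl
    · exact ⟨w, .inr huv.symm, hwe⟩
    · exact ⟨w, .inl huv, hwe⟩
  · rcases Sym2.mem_iff.1 hp with rfl | rfl
    · exact ⟨w, .inl hpw, hwe⟩
    · exact ⟨w, .inr hpw, hwe⟩

/-- Double counting of the incidences between `S` and the edges meeting it: edges with both
endpoints in `S` are counted twice. -/
theorem card_edgesMeeting_add_card_le_sum_degree (S : Finset V) {F : Finset (Sym2 V)}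
    (hF : F ⊆ G.edgeFinset) (hFS : ∀ e ∈ F, ∀ a ∈ e, a ∈ S) :
    #(G.edgesMeeting S) + #F ≤ ∑ a ∈ S, G.degree a := by
  set M := G.edgesMeeting S
  let endsIn (e : Sym2 V) : Finset V := S.bipartiteBelow (· ∈ ·) e
  have hFM : F ⊆ M := fun e he =>
    mem_filter.2 ⟨hF he, ⟨e.out.1, hFS e he _ (Sym2.out_fst_mem e), Sym2.out_fst_mem e⟩⟩
  have hone : ∀ e ∈ M \ F, 1 ≤ #(endsIn e) := fun e he => by
    obtain ⟨a, ha, hae⟩ := (mem_filter.1 (mem_sdiff.1 he).1).2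
    exact card_pos.2 ⟨a, (mem_bipartiteBelow _).2 ⟨ha, hae⟩⟩
  have htwo : ∀ e ∈ F, 2 ≤ #(endsIn e) := fun e he => by
    induction e using Sym2.ind with
    | h a b =>
      have hab : a ≠ b := G.ne_of_adj (mem_edgeFinset.1 (hF he))
      have hsub : {a, b} ⊆ endsIn s(a, b) := by
        simp [endsIn, insert_subset_iff, hFS _ he]
      simpa [card_pair hab] using card_le_card hsub
  have hdeg : ∀ a ∈ S, #(M.bipartiteAbove (· ∈ ·) a) = G.degree a := fun a ha => by
    rw [← card_incidenceFinset_eq_degree]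
    congr 1
    ext e
    rw [mem_bipartiteAbove, mem_incidenceFinset]
    simp only [M, edgesMeeting, mem_filter, mem_edgeFinset]
    exact ⟨fun h => ⟨h.1.1, h.2⟩, fun h => ⟨⟨h.1, a, ha, h.2⟩, h.2⟩⟩
  calc #M + #F = #(M \ F) • 1 + #F • 2 := by
        rw [← card_sdiff_add_card_eq_card hFM, smul_eq_mul, smul_eq_mul]; ring
    _ ≤ ∑ e ∈ M \ F, #(endsIn e) + ∑ e ∈ F, #(endsIn e) :=
        add_le_add (card_nsmul_le_sum _ _ _ hone) (card_nsmul_le_sum _ _ _ htwo)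
    _ = ∑ e ∈ M, #(endsIn e) := sum_sdiff hFM
    _ = ∑ a ∈ S, #(M.bipartiteAbove (· ∈ ·) a) :=
        (sum_card_bipartiteAbove_eq_sum_card_bipartiteBelow _).symm
    _ = ∑ a ∈ S, G.degree a := sum_congr rfl hdeg

/-- The double star at `uv`, together with the edge `ab` of a triangle `uab`, gives as many edges
inside `N(u) ∪ N(v)` as there are vertices. -/
theorem exists_edges_inside_neighborFinset_union {u v a b : V} (huv : G.Adj u v)
    (hua : G.Adj u a) (hub : G.Adj u b) (hab : G.Adj a b) :
    ∃ F ⊆ G.edgeFinset, (∀ e ∈ F, ∀ w ∈ e, w ∈ G.neighborFinset u ∪ G.neighborFinset v) ∧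
      #(G.neighborFinset u ∪ G.neighborFinset v) ≤ #F := by
  set S := G.neighborFinset u ∪ G.neighborFinset v
  let star (w : V) : Sym2 V := if G.Adj u w then s(u, w) else s(v, w)
  have hS : ∀ {w}, w ∈ S ↔ G.Adj u w ∨ G.Adj v w := by simp [S]
  have hstar : ∀ w ∈ S.erase u, star w ∈ G.edgeFinset ∧ ∀ p ∈ star w, p ∈ S := by
    intro w hw
    have hw := (mem_erase.1 hw).2
    by_cases huw : G.Adj u w
    · simpa [star, huw, hS] using huv.symm
    · have hvw := (hS.1 hw).resolve_left huw
      simpa [star, huw, hS] using ⟨hvw, huv, hvw⟩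
  have hinj : Set.InjOn star (S.erase u) := by
    intro w₁ hw₁ w₂ hw₂ h
    have hne₁ := (mem_erase.1 hw₁).1
    have hne₂ := (mem_erase.1 hw₂).1
    by_cases h₁ : G.Adj u w₁ <;> by_cases h₂ : G.Adj u w₂ <;>
      simp only [star, h₁, h₂, if_true, if_false, Sym2.eq_iff] at h <;>
      aesop (add safe G.ne_of_adj)
  have hab_new : s(a, b) ∉ (S.erase u).image star := by
    simp only [mem_image, not_exists, not_and]
    intro w _ h
    by_cases huw : G.Adj u w <;> simp only [star, huw, if_true, if_false, Sym2.eq_iff] at h <;>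
      aesop (add safe G.ne_of_adj)
  refine ⟨insert s(a, b) ((S.erase u).image star), ?_, ?_, ?_⟩
  · exact insert_subset (mem_edgeFinset.2 hab) fun e he => by
      obtain ⟨w, hw, rfl⟩ := mem_image.1 he
      exact (hstar w hw).1
  · simp only [mem_insert, mem_image]
    rintro e (rfl | ⟨w, hw, rfl⟩) p hp
    · rcases Sym2.mem_iff.1 hp with rfl | rfl <;> simp [hS, hua, hub]
    · exact (hstar w hw).2 p hp
  · rw [card_insert_of_notMem hab_new, card_image_of_injOn hinj,
      card_erase_of_mem (hS.2 (.inr huv.symm))]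
    omega

theorem card_neighborFinset_union_add_card_inter_le (hΔ : G.maxDegree ≤ 3) (u v : V) :
    #(G.neighborFinset u ∪ G.neighborFinset v) + #(G.neighborFinset u ∩ G.neighborFinset v)
      ≤ 6 := by
  rw [card_union_add_card_inter, card_neighborFinset_eq_degree, card_neighborFinset_eq_degree]
  have := G.degree_le_maxDegree u
  have := G.degree_le_maxDegree v
  omega

theorem card_neighborFinset_union_le_of_adj_of_adj (hΔ : G.maxDegree ≤ 3) {u v w : V}
    (huw : G.Adj u w) (hvw : G.Adj v w) : #(G.neighborFinset u ∪ G.neighborFinset v) ≤ 5 := by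
  have := card_neighborFinset_union_add_card_inter_le hΔ u v
  have : 0 < #(G.neighborFinset u ∩ G.neighborFinset v) := card_pos.2 ⟨w, by simp [huw, hvw]⟩
  omega

theorem card_edgesMeeting_le_of_triangle (hΔ : G.maxDegree ≤ 3) {u v a b : V} (huv : G.Adj u v)
    (hua : G.Adj u a) (hub : G.Adj u b) (hab : G.Adj a b) :
    #(G.edgesMeeting (G.neighborFinset u ∪ G.neighborFinset v))
      ≤ 2 * #(G.neighborFinset u ∪ G.neighborFinset v) := by
  obtain ⟨F, hF, hFS, hcard⟩ := exists_edges_inside_neighborFinset_union huv hua hub hab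
  have hcount := G.card_edgesMeeting_add_card_le_sum_degree _ hF hFS
  have hdeg : ∑ w ∈ G.neighborFinset u ∪ G.neighborFinset v, G.degree w
      ≤ #(G.neighborFinset u ∪ G.neighborFinset v) • 3 :=
    sum_le_card_nsmul _ _ _ fun w _ => (G.degree_le_maxDegree w).trans hΔ
  rw [smul_eq_mul] at hdeg
  omega

end SimpleGraph

namespace StronglyListColorableExcept

open SimpleGraph

variable [Fintype V] [DecidableEq V] [DecidableRel G.Adj] {U : Finset (Sym2 V)}

theorem erase_of_triangle (hΔ : G.maxDegree ≤ 3) (h : StronglyListColorableExcept G L U)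
    {u v a b : V} (hU : U ⊆ G.incidenceFinset u) (huvU : s(u, v) ∈ U)
    (hua : G.Adj u a) (hub : G.Adj u b) (hab : G.Adj a b)
    (hcard : 2 * #(G.neighborFinset u ∪ G.neighborFinset v) < #(L s(u, v)) + #U) :
    StronglyListColorableExcept G L (U.erase s(u, v)) := by
  have huv : G.Adj u v := ((mem_incidenceFinset _ _ _).1 (hU huvU)).1
  have hM := card_edgesMeeting_le_of_triangle hΔ huv hua hub hab
  set M := G.edgesMeeting (G.neighborFinset u ∪ G.neighborFinset v)
  have hUM : U ⊆ M := fun e he => by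
    obtain ⟨he, hue⟩ := (mem_incidenceFinset _ _ _).1 (hU he)
    exact mem_filter.2 ⟨mem_edgeFinset.2 he, u, by simp [huv.symm], hue⟩
  refine h.erase (M \ U) (fun e he heU hs => mem_sdiff.2
    ⟨mem_edgesMeeting_of_strongSees huv he hs, heU⟩) ?_
  have := card_sdiff_add_card_eq_card hUM
  omega

theorem pair_of_incidenceFinset (hΔ : G.maxDegree ≤ 3) (hL : ∀ e ∈ G.edgeSet, 10 ≤ #(L e))
    {x y z : V} (hxy : G.Adj x y) (hxz : G.Adj x z) (hyz : G.Adj y z)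
    (h : StronglyListColorableExcept G L (G.incidenceFinset x)) :
    StronglyListColorableExcept G L {s(x, z), s(x, y)} := by
  by_cases hsub : G.incidenceFinset x ⊆ {s(x, z), s(x, y)}
  · exact h.mono hsub
  obtain ⟨e, he, hne⟩ := not_subset.1 hsub
  obtain ⟨hedge, hxe⟩ := (mem_incidenceFinset _ _ _).1 he
  obtain ⟨w, rfl⟩ := Sym2.mem_iff_exists.1 hxe
  have hU3 : #({s(x, w), s(x, z), s(x, y)} : Finset (Sym2 V)) = 3 := by
    rw [card_insert_of_notMem hne, card_pair (by simp [(G.ne_of_adj hyz).symm, G.ne_of_adj hxy])]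
  have hinc : G.incidenceFinset x = {s(x, w), s(x, z), s(x, y)} := by
    refine (eq_of_subset_of_card_le ?_ ?_).symm
    · simp [insert_subset_iff, he, hxy, hxz]
    · rw [card_incidenceFinset_eq_degree, hU3]
      exact (G.degree_le_maxDegree x).trans hΔ
  rw [hinc] at h
  have hS := card_neighborFinset_union_add_card_inter_le hΔ x w
  have hL' := hL _ hedge
  simpa [erase_insert hne] using h.erase_of_triangle hΔ hinc.ge (mem_insert_self _ _) hxy hxz hyz
    (by omega)

theorem stronglyListColorable_of_triangle (hΔ : G.maxDegree ≤ 3)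
    (hL : ∀ e ∈ G.edgeSet, 10 ≤ #(L e)) {x y z : V} (hxy : G.Adj x y) (hxz : G.Adj x z)
    (hyz : G.Adj y z) (h : StronglyListColorableExcept G L {s(x, z), s(x, y)}) :
    StronglyListColorable G L := by
  have hLxz := hL _ (G.mem_edgeSet.2 hxz)
  have hLxy := hL _ (G.mem_edgeSet.2 hxy)
  have hSxz := card_neighborFinset_union_le_of_adj_of_adj hΔ hxy hyz.symm
  have hSxy := card_neighborFinset_union_le_of_adj_of_adj hΔ hxz hyz
  have hne : s(x, z) ≠ s(x, y) := by simp [(G.ne_of_adj hyz).symm, G.ne_of_adj hxy]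
  have hpair : #({s(x, z), s(x, y)} : Finset (Sym2 V)) = 2 := card_pair hne
  have hy : StronglyListColorableExcept G L {s(x, y)} := by
    simpa [hne] using h.erase_of_triangle hΔ (by simp [insert_subset_iff, hxy, hxz])
      (mem_insert_self _ _) hxy hxz hyz (by omega)
  have hnone : StronglyListColorableExcept G L ∅ := by
    simpa using hy.erase_of_triangle hΔ (by simp [hxy]) (mem_singleton_self _) hxy hxz hyz
      (by simp; omega)
  exact stronglyListColorableExcept_empty.1 hnone

end StronglyListColorableExcept

end

/-- A minimal counterexample (with lists of size at least 10) has no triangle. -/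
theorem minimal_counterexample_triangle_free
    {V β : Type*} [Fintype V] (G : SimpleGraph V) [DecidableRel G.Adj]
    (hΔ : G.maxDegree ≤ 3) (L : Sym2 V → Finset β)
    (hL : ∀ e ∈ G.edgeSet, 10 ≤ (L e).card)
    (hG : ¬ StronglyListColorable G L)
    (hmin : ∀ H : SimpleGraph V, H ≤ G → H ≠ G → StronglyListColorable H L) :
    G.CliqueFree 3 := by
  classical
  intro t ht
  obtain ⟨x, y, z, hxy, hxz, hyz, rfl⟩ := card_eq_three.1 ht.card_eq
  have axy : G.Adj x y := ht.1 (by simp) (by simp) hxy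
  have axz : G.Adj x z := ht.1 (by simp) (by simp) hxz
  have ayz : G.Adj y z := ht.1 (by simp) (by simp) hyz
  have hdel : G.deleteIncidenceSet x ≠ G := fun h => by
    have : (G.deleteIncidenceSet x).Adj x y := by rw [h]; exact axy
    exact (SimpleGraph.deleteIncidenceSet_adj.1 this).2.1 rfl
  have h₀ := (hmin _ (G.deleteIncidenceSet_le x) hdel).except_incidenceFinset
  have h₁ := h₀.pair_of_incidenceFinset hΔ hL axy axz ayz
  exact hG (h₁.stronglyListColorable_of_triangle hΔ hL axy axz ayz)
end

section
/- Let P be the polynomial in x1,…,x9 given by the product of (x_k − x_l) over all pairs 1 ≤ k < l ≤ 9 except the pairs {1,9}, {5,8}, {3,6}, {4,7}. If S1,…,S9 are finite sets of elements of a field of characteristic 0 with |S2| ≥ 6 and |S_i| ≥ 5 for all i ≠ 2, then there exist s_i ∈ S_i with P(s1,…,s9) ≠ 0. -/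
section FrozenDefs
open MvPolynomial

/-- The four excluded pairs `{1,9}, {5,8}, {3,6}, {4,7}` (0-indexed). -/
def excludedPairs : Finset (Fin 9 × Fin 9) :=
  {(0, 8), (4, 7), (2, 5), (3, 6)}

/-- `P = ∏_{1 ≤ k < l ≤ 9, {k,l} not excluded} (x_k − x_l)` over a field `F`. -/
noncomputable def P (F : Type*) [Field F] : MvPolynomial (Fin 9) F :=
  ∏ p ∈ Finset.univ.filter
      (fun p : Fin 9 × Fin 9 => p.1 < p.2 ∧ p ∉ excludedPairs),
    (X p.1 - X p.2)

end FrozenDefs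


section CNAux
open Polynomial Finset

theorem univ_lagrange {F : Type*} [Field F] [DecidableEq F] (S : Finset F) (m : ℕ)
    (hm : m < S.card) :
    ∑ v ∈ S, v ^ m * ∏ u ∈ S.erase v, (v - u)⁻¹ =
      if m = S.card - 1 then 1 else 0 := by
  have hvs : Set.InjOn (id : F → F) S := Function.injective_id.injOn
  have hdeg : (Polynomial.X ^ m : F[X]).degree < S.card :=
    (degree_X_pow_le (R := F) m).trans_lt (by exact_mod_cast hm)
  have hinterp := Lagrange.eq_interpolate (f := (Polynomial.X ^ m : F[X])) hvs hdeg
  have hc := congrArg (fun p => p.coeff (S.card - 1)) hinterp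
  simp only [Lagrange.interpolate_apply, eval_pow, eval_X, id_eq] at hc
  rw [finset_sum_coeff] at hc
  have hbasis : ∀ v ∈ S, (C (v ^ m) * Lagrange.basis S id v).coeff (S.card - 1)
      = v ^ m * ∏ u ∈ S.erase v, (v - u)⁻¹ := by
    intro v hv
    rw [coeff_C_mul, Lagrange.basis]
    congr 1
    have hcard : S.card - 1 = (S.erase v).card * 1 := by
      rw [card_erase_of_mem hv, mul_one]
    rw [hcard, coeff_prod_of_natDegree_le]
    · refine Finset.prod_congr rfl fun u _ => ?_
      simp [Lagrange.basisDivisor, coeff_C_mul, coeff_X_one, coeff_C]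
    · intro u _
      by_cases h : (v : F) = u
      · simp [h, Lagrange.natDegree_basisDivisor_self]
      · exact le_of_eq (Lagrange.natDegree_basisDivisor_of_ne h)
  rw [Finset.sum_congr rfl hbasis] at hc
  rw [← hc, coeff_X_pow]
  by_cases h : m = S.card - 1 <;> simp [h] <;> omega

theorem coeff_formula {F : Type*} [Field F] [DecidableEq F] {n : ℕ}
    (p : MvPolynomial (Fin n) F) (t : Fin n → ℕ) (S : Fin n → Finset F)
    (hcard : ∀ i, (S i).card = t i + 1)
    (hdeg : p.totalDegree ≤ ∑ i, t i) :
    ∑ s ∈ Fintype.piFinset S, MvPolynomial.eval s p *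
        ∏ i, ∏ u ∈ (S i).erase (s i), (s i - u)⁻¹
      = MvPolynomial.coeff (Finsupp.equivFunOnFinite.symm t) p := by
  set β := Finsupp.equivFunOnFinite.symm t with hβdef
  have hβ : ∀ i, β i = t i := fun i => rfl
  have hsupp_sum : ∀ m ∈ p.support, ∑ i, m i ≤ ∑ i, t i := by
    intro m hm
    refine le_trans ?_ (le_trans (MvPolynomial.le_totalDegree hm) hdeg)
    rw [Finsupp.sum_fintype]
    · simp
  have key : ∀ m ∈ p.support,
      (∏ i, ∑ v ∈ S i, v ^ m i * ∏ u ∈ (S i).erase v, (v - u)⁻¹)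
        = if m = β then 1 else 0 := by
    intro m hm
    by_cases hmb : m = β
    · rw [if_pos hmb, hmb]
      refine Finset.prod_eq_one fun i _ => ?_
      rw [hβ i, univ_lagrange _ _ (by rw [hcard i]; omega), if_pos (by rw [hcard i]; omega)]
    · rw [if_neg hmb]
      obtain ⟨j, hj⟩ : ∃ j, m j < t j := by
        by_contra hcon; push_neg at hcon
        apply hmb
        have hall : ∀ i, m i = t i := by
          intro i
          by_contra hne
          have hlt : t i < m i := lt_of_le_of_ne (hcon i) (Ne.symm hne)
          have : ∑ k, t k < ∑ k, m k :=
            Finset.sum_lt_sum (fun k _ => hcon k) ⟨i, Finset.mem_univ i, hlt⟩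
          have := hsupp_sum m hm
          omega
        ext i
        rw [hall i]; exact (hβ i).symm
      refine Finset.prod_eq_zero (Finset.mem_univ j) ?_
      rw [univ_lagrange _ _ (by rw [hcard j]; omega), if_neg (by rw [hcard j]; omega)]
  calc
    ∑ s ∈ Fintype.piFinset S, MvPolynomial.eval s p *
        ∏ i, ∏ u ∈ (S i).erase (s i), (s i - u)⁻¹
      = ∑ s ∈ Fintype.piFinset S, ∑ m ∈ p.support,
          MvPolynomial.coeff m p *
            ∏ i, (s i ^ m i * ∏ u ∈ (S i).erase (s i), (s i - u)⁻¹) := by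
        refine Finset.sum_congr rfl fun s _ => ?_
        rw [MvPolynomial.eval_eq', Finset.sum_mul]
        refine Finset.sum_congr rfl fun m _ => ?_
        rw [mul_assoc, ← Finset.prod_mul_distrib]
    _ = ∑ m ∈ p.support, MvPolynomial.coeff m p * ∑ s ∈ Fintype.piFinset S,
          ∏ i, (s i ^ m i * ∏ u ∈ (S i).erase (s i), (s i - u)⁻¹) := by
        rw [Finset.sum_comm]
        exact Finset.sum_congr rfl fun m _ => (Finset.mul_sum _ _ _).symm
    _ = ∑ m ∈ p.support, MvPolynomial.coeff m p *
          ∏ i, ∑ v ∈ S i, v ^ m i * ∏ u ∈ (S i).erase v, (v - u)⁻¹ := by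
        refine Finset.sum_congr rfl fun m _ => ?_
        rw [Finset.prod_univ_sum]
    _ = MvPolynomial.coeff β p := by
        rw [Finset.sum_congr rfl fun m hm => by rw [key m hm]]
        simp only [mul_ite, mul_one, mul_zero]
        rw [Finset.sum_ite_eq' p.support β (fun m => MvPolynomial.coeff m p)]
        by_cases hb : β ∈ p.support
        · rw [if_pos hb]
        · rw [if_neg hb]
          exact (MvPolynomial.notMem_support_iff.mp hb).symm

theorem cn_exists {F : Type*} [Field F] {n : ℕ} (p : MvPolynomial (Fin n) F)
    (t : Fin n → ℕ) (S : Fin n → Finset F) (hcard : ∀ i, t i + 1 ≤ (S i).card)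
    (hdeg : p.totalDegree ≤ ∑ i, t i)
    (hcoeff : MvPolynomial.coeff (Finsupp.equivFunOnFinite.symm t) p ≠ 0) :
    ∃ s : Fin n → F, (∀ i, s i ∈ S i) ∧ MvPolynomial.eval s p ≠ 0 := by
  classical
  have hsub : ∀ i, ∃ T ⊆ S i, T.card = t i + 1 := fun i =>
    Finset.exists_subset_card_eq (hcard i)
  choose S' hS'sub hS'card using hsub
  by_contra hcon
  push_neg at hcon
  have hzero : ∑ s ∈ Fintype.piFinset S', MvPolynomial.eval s p *
      ∏ i, ∏ u ∈ (S' i).erase (s i), (s i - u)⁻¹ = 0 := by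
    refine Finset.sum_eq_zero fun s hs => ?_
    rw [hcon s fun i => hS'sub i (by
      exact (Fintype.mem_piFinset.mp hs) i), zero_mul]
  rw [coeff_formula p t S' hS'card hdeg] at hzero
  exact hcoeff hzero

end CNAux


namespace CNDP

abbrev K := List ℕ

def fV (l : K) (i : Fin 9) : ℕ := l.getD i 0

noncomputable def toF (l : K) : Fin 9 →₀ ℕ := Finsupp.equivFunOnFinite.symm (fV l)

noncomputable def toMv (L : List (K × ℤ)) : MvPolynomial (Fin 9) ℤ :=
  (L.map fun t => MvPolynomial.monomial (toF t.1) t.2).sum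

@[simp] lemma toMv_nil : toMv [] = 0 := rfl

@[simp] lemma toMv_cons (k : K) (c : ℤ) (t : List (K × ℤ)) :
    toMv ((k, c) :: t) = MvPolynomial.monomial (toF k) c + toMv t := by
  simp [toMv]

def bump : ℕ → K → K
  | 0, [] => [1]
  | 0, x :: xs => (x + 1) :: xs
  | a + 1, [] => 0 :: bump a []
  | a + 1, x :: xs => x :: bump a xs

lemma bump_getD (a : ℕ) (l : K) (i : ℕ) :
    (bump a l).getD i 0 = l.getD i 0 + if i = a then 1 else 0 := by
  induction a generalizing l i with
  | zero =>
    cases l <;> cases i <;> simp [bump]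
  | succ a ih =>
    cases l with
    | nil =>
      cases i with
      | zero => simp [bump]
      | succ i => simpa [bump, Nat.succ_inj] using ih [] i
    | cons x xs =>
      cases i with
      | zero => simp [bump]
      | succ i => simpa [bump, Nat.succ_inj] using ih xs i

lemma fV_bump (a : Fin 9) (l : K) :
    fV (bump a.val l) = fV l + fun i => if i = a then 1 else 0 := by
  funext i
  simp only [fV, bump_getD, Pi.add_apply]
  congr 1
  simp [Fin.val_eq_val]

lemma toF_bump (a : Fin 9) (l : K) :
    toF (bump a.val l) = toF l + Finsupp.single a 1 := by
  ext i
  simp only [toF, Finsupp.add_apply, Finsupp.coe_equivFunOnFinite_symm, fV_bump,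
    Pi.add_apply, Finsupp.single_apply]
  congr 1
  rcases eq_or_ne i a with h | h
  · simp [h]
  · simp [h, h.symm]

def hd : K → ℕ | [] => 0 | x :: _ => x
def tl : K → K | [] => [] | _ :: xs => xs

def chk : K → K → K → Bool
  | [], _, _ => true
  | b :: bs, l, r => decide (b ≤ hd l + hd r) && chk bs (tl l) (tl r)

lemma getD_tl (l : K) (i : ℕ) : (tl l).getD i 0 = l.getD (i + 1) 0 := by
  cases l <;> simp [tl]

lemma hd_eq (l : K) : hd l = l.getD 0 0 := by cases l <;> simp [hd]

lemma chk_iff (B l r : K) :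
    chk B l r = true ↔ ∀ i : ℕ, B.getD i 0 ≤ l.getD i 0 + r.getD i 0 := by
  induction B generalizing l r with
  | nil => simp [chk]
  | cons b bs ih =>
    cases l <;> cases r <;>
    · simp only [chk, Bool.and_eq_true, decide_eq_true_eq, ih, hd, tl]
      constructor
      · rintro ⟨h0, h1⟩ i
        cases i with
        | zero => simpa using of_decide_eq_true h0
        | succ i => simpa using h1 i
      · intro h
        exact ⟨decide_eq_true (by simpa using h 0), fun i => by simpa using h (i + 1)⟩

def half (a : Fin 9) (bx r : K) : List (K × ℤ) → List (K × ℤ)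
  | [] => []
  | (k, c) :: t =>
    if k.getD a.val 0 < bx.getD a.val 0 ∧ chk bx (bump a.val k) r then
      (bump a.val k, c) :: half a bx r t
    else half a bx r t

def negP (L : List (K × ℤ)) : List (K × ℤ) := L.map fun t => (t.1, -t.2)

lemma toMv_negP (L : List (K × ℤ)) : toMv (negP L) = -toMv L := by
  induction L with
  | nil => simp [negP]
  | cons kc t ih =>
    obtain ⟨k, c⟩ := kc
    simp only [negP, List.map_cons, toMv_cons, map_neg]
    simp only [negP] at ih
    rw [ih]
    abel

def cmp : K → K → Ordering
  | [], [] => .eq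
  | [], _ :: _ => .lt
  | _ :: _, [] => .gt
  | a :: as, b :: bs => if a < b then .lt else if b < a then .gt else cmp as bs

lemma cmp_eq {k l : K} (h : cmp k l = .eq) : k = l := by
  induction k generalizing l with
  | nil => cases l with
    | nil => rfl
    | cons b bs => simp [cmp] at h
  | cons a as ih =>
    cases l with
    | nil => simp [cmp] at h
    | cons b bs =>
      simp only [cmp] at h
      split_ifs at h with h1 h2
      have hab : a = b := by omega
      rw [hab, ih h]

def mergeF : ℕ → List (K × ℤ) → List (K × ℤ) → List (K × ℤ)
  | _, [], M => M
  | _, L, [] => L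
  | 0, L, M => L ++ M
  | n + 1, (k, c) :: t, (k', c') :: t' =>
    match cmp k k' with
    | .lt => (k, c) :: mergeF n t ((k', c') :: t')
    | .gt => (k', c') :: mergeF n ((k, c) :: t) t'
    | .eq => (k, c + c') :: mergeF n t t'

def merge (L M : List (K × ℤ)) : List (K × ℤ) := mergeF (L.length + M.length) L M

lemma toMv_append (L M : List (K × ℤ)) : toMv (L ++ M) = toMv L + toMv M := by
  simp [toMv]

lemma toMv_mergeF (n : ℕ) (L M : List (K × ℤ)) :
    toMv (mergeF n L M) = toMv L + toMv M := by
  induction n generalizing L M with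
  | zero =>
    cases L with
    | nil => simp [mergeF]
    | cons a t =>
      cases M with
      | nil => simp [mergeF]
      | cons b t' => exact toMv_append _ _
  | succ n ih =>
    cases L with
    | nil => simp [mergeF]
    | cons kc t =>
      cases M with
      | nil => simp [mergeF]
      | cons kc' t' =>
        obtain ⟨k, c⟩ := kc
        obtain ⟨k', c'⟩ := kc'
        rw [mergeF]
        rcases hcmp : cmp k k' with hl | he | hg
        · simp only [toMv_cons, ih]
          abel
        · have hk : k = k' := cmp_eq hcmp
          subst hk
          simp only [toMv_cons, ih, map_add]
          abel
        · simp only [toMv_cons, ih]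
          abel

lemma toMv_merge (L M : List (K × ℤ)) : toMv (merge L M) = toMv L + toMv M :=
  toMv_mergeF _ L M

lemma coeff_zero_of_degreeOf_lt {R : MvPolynomial (Fin 9) ℤ} {m : Fin 9 →₀ ℕ} {j : Fin 9}
    (h : R.degreeOf j < m j) : MvPolynomial.coeff m R = 0 := by
  by_contra hc
  exact absurd (MvPolynomial.monomial_le_degreeOf j (MvPolynomial.mem_support_iff.mpr hc))
    (by omega)

lemma toF_apply (l : K) (i : Fin 9) : toF l i = fV l i := rfl

lemma half_coeff (bx r : K) (hlen : bx.length ≤ 9) (a : Fin 9) (R : MvPolynomial (Fin 9) ℤ)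
    (hR : ∀ i : Fin 9, R.degreeOf i ≤ fV r i) (L : List (K × ℤ)) :
    MvPolynomial.coeff (toF bx) (toMv (half a bx r L) * R)
      = MvPolynomial.coeff (toF bx) (toMv L * (MvPolynomial.X a * R)) := by
  induction L with
  | nil => simp [half]
  | cons kc t ih =>
    obtain ⟨k, c⟩ := kc
    have hmono : (MvPolynomial.monomial (toF k) c) * (MvPolynomial.X a * R)
        = (MvPolynomial.monomial (toF (bump a.val k)) c) * R := by
      rw [← mul_assoc, toF_bump,
        show (MvPolynomial.X a : MvPolynomial (Fin 9) ℤ)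
          = MvPolynomial.monomial (Finsupp.single a 1) 1 from rfl,
        MvPolynomial.monomial_mul, mul_one]
    rw [toMv_cons, add_mul, MvPolynomial.coeff_add, hmono]
    rw [half]
    split_ifs with hg
    · rw [toMv_cons, add_mul, MvPolynomial.coeff_add, ih]
    · rw [ih]
      have hz : MvPolynomial.coeff (toF bx)
          ((MvPolynomial.monomial (toF (bump a.val k)) c) * R) = 0 := by
        rw [MvPolynomial.coeff_monomial_mul']
        rw [not_and_or] at hg
        rcases hg with h1 | h2
        · rw [if_neg]
          intro hle
          have hla := hle a
          rw [toF_apply, toF_apply, fV_bump] at hla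
          simp only [Pi.add_apply] at hla
          norm_num at hla
          have e1 : fV k a = k.getD a.val 0 := rfl
          have e2 : fV bx a = bx.getD a.val 0 := rfl
          omega
        · have hex : ∃ i : ℕ, ¬ (bx.getD i 0 ≤ (bump a.val k).getD i 0 + r.getD i 0) := by
            by_contra hall
            push_neg at hall
            exact h2 ((chk_iff bx (bump a.val k) r).mpr hall)
          obtain ⟨i, hi⟩ := hex
          push_neg at hi
          have hilt : i < 9 := by
            by_contra hge
            push_neg at hge
            have : bx.getD i 0 = 0 := by
              apply List.getD_eq_default
              omega
            omega
          split_ifs with hle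
          · have hcz : MvPolynomial.coeff (toF bx - toF (bump a.val k)) R = 0 := by
              apply coeff_zero_of_degreeOf_lt (j := ⟨i, hilt⟩)
              have hsub : (toF bx - toF (bump a.val k)) ⟨i, hilt⟩
                  = fV bx ⟨i, hilt⟩ - fV (bump a.val k) ⟨i, hilt⟩ := by
                rw [Finsupp.tsub_apply, toF_apply, toF_apply]
              rw [hsub]
              have e1 : fV bx ⟨i, hilt⟩ = bx.getD i 0 := rfl
              have e2 : fV (bump a.val k) ⟨i, hilt⟩ = (bump a.val k).getD i 0 := rfl
              have e3 : fV r ⟨i, hilt⟩ = r.getD i 0 := rfl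
              have hRj := hR ⟨i, hilt⟩
              omega
            rw [hcz, mul_zero]
          · rfl
      rw [hz, zero_add]

def rvec : List (Fin 9 × Fin 9) → K
  | [] => []
  | (a, b) :: t => bump a.val (bump b.val (rvec t))

noncomputable def prodE : List (Fin 9 × Fin 9) → MvPolynomial (Fin 9) ℤ
  | [] => 1
  | (a, b) :: t => (MvPolynomial.X a - MvPolynomial.X b) * prodE t

lemma degreeOf_X_sub_X (a b i : Fin 9) :
    (MvPolynomial.X a - MvPolynomial.X b : MvPolynomial (Fin 9) ℤ).degreeOf i
      ≤ (if i = a then 1 else 0) + (if i = b then 1 else 0) := by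
  rw [sub_eq_add_neg]
  refine le_trans (MvPolynomial.degreeOf_add_le _ _ _) ?_
  have h1 : (MvPolynomial.X a : MvPolynomial (Fin 9) ℤ).degreeOf i = if i = a then 1 else 0 :=
    MvPolynomial.degreeOf_X _ _
  have h2 : (-MvPolynomial.X b : MvPolynomial (Fin 9) ℤ).degreeOf i = if i = b then 1 else 0 := by
    rw [MvPolynomial.degreeOf, MvPolynomial.degrees_neg, ← MvPolynomial.degreeOf,
      MvPolynomial.degreeOf_X]
  rw [h1, h2]
  exact max_le (by split_ifs <;> omega) (by split_ifs <;> omega)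

lemma degreeOf_prodE (es : List (Fin 9 × Fin 9)) (i : Fin 9) :
    (prodE es).degreeOf i ≤ fV (rvec es) i := by
  induction es with
  | nil =>
    have h1 : ((1 : MvPolynomial (Fin 9) ℤ)).degreeOf i = 0 := by
      have := MvPolynomial.degreeOf_C (σ := Fin 9) (1 : ℤ) i
      simpa using this
    show ((1 : MvPolynomial (Fin 9) ℤ)).degreeOf i ≤ fV [] i
    omega
  | cons ab t ih =>
    obtain ⟨a, b⟩ := ab
    refine le_trans (MvPolynomial.degreeOf_mul_le _ _ _) ?_
    refine le_trans (add_le_add (degreeOf_X_sub_X a b i) ih) ?_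
    show _ ≤ fV (bump a.val (bump b.val (rvec t))) i
    rw [fV_bump, fV_bump]
    simp only [Pi.add_apply]
    omega

def run (bx : K) : List (Fin 9 × Fin 9) → List (K × ℤ) → List (K × ℤ)
  | [], L => L
  | (a, b) :: t, L =>
      run bx t (merge (half a bx (rvec t) L) (negP (half b bx (rvec t) L)))

lemma run_coeff (bx : K) (hlen : bx.length ≤ 9) (es : List (Fin 9 × Fin 9)) :
    ∀ L : List (K × ℤ),
    MvPolynomial.coeff (toF bx) (toMv L * prodE es)
      = MvPolynomial.coeff (toF bx) (toMv (run bx es L)) := by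
  induction es with
  | nil => intro L; simp [run, prodE]
  | cons ab t ih =>
    obtain ⟨a, b⟩ := ab
    intro L
    rw [run, ← ih, toMv_merge, toMv_negP]
    have hR := degreeOf_prodE t
    have Ha := half_coeff bx (rvec t) hlen a (prodE t) hR L
    have Hb := half_coeff bx (rvec t) hlen b (prodE t) hR L
    have e1 : toMv L * prodE ((a, b) :: t)
        = toMv L * (MvPolynomial.X a * prodE t) - toMv L * (MvPolynomial.X b * prodE t) := by
      show toMv L * ((MvPolynomial.X a - MvPolynomial.X b) * prodE t) = _
      ring
    have e2 : (toMv (half a bx (rvec t) L) + -toMv (half b bx (rvec t) L)) * prodE t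
        = toMv (half a bx (rvec t) L) * prodE t - toMv (half b bx (rvec t) L) * prodE t := by
      ring
    rw [e1, e2, MvPolynomial.coeff_sub, MvPolynomial.coeff_sub, Ha, Hb]

def coeffAt (bx : K) : List (K × ℤ) → ℤ
  | [] => 0
  | (k, c) :: t => (if fV k = fV bx then c else 0) + coeffAt bx t

lemma coeffAt_toMv (bx : K) (L : List (K × ℤ)) :
    MvPolynomial.coeff (toF bx) (toMv L) = coeffAt bx L := by
  induction L with
  | nil => simp [coeffAt]
  | cons kc t ih =>
    obtain ⟨k, c⟩ := kc
    rw [toMv_cons, MvPolynomial.coeff_add, ih, coeffAt]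
    congr 1
    rw [MvPolynomial.coeff_monomial]
    by_cases h : fV k = fV bx
    · have h' : toF k = toF bx := congrArg Finsupp.equivFunOnFinite.symm h
      rw [if_pos h, if_pos h']
    · have h' : ¬ toF k = toF bx := fun hh => h (Finsupp.equivFunOnFinite.symm.injective hh)
      rw [if_neg h, if_neg h']

def bxL : K := [4, 5, 4, 4, 3, 3, 3, 3, 3]

def edgesL : List (Fin 9 × Fin 9) := [(0,1), (0,2), (0,3), (0,4), (0,5), (0,6), (0,7), (1,2), (1,3), (1,4), (1,5), (1,6), (1,7), (1,8), (2,3), (2,4), (2,6), (2,7), (2,8), (3,4), (3,5), (3,7), (3,8), (4,5), (4,6), (4,8), (5,6), (5,7), (5,8), (6,7), (6,8), (7,8)]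

set_option maxRecDepth 100000 in
set_option maxHeartbeats 4000000 in
lemma coeff_compute : MvPolynomial.coeff (toF bxL) (prodE edgesL) = -6 := by
  have h0 : toMv [(([] : K), (1 : ℤ))] = 1 := by
    have hz : toF ([] : K) = 0 := by
      ext i
      simp [toF, fV]
    simp [toMv, hz, MvPolynomial.monomial_zero']
  have h := run_coeff bxL (by norm_num [bxL]) edgesL [(([] : K), (1 : ℤ))]
  rw [h0, one_mul] at h
  rw [h, coeffAt_toMv]
  decide


lemma prodE_eq (es : List (Fin 9 × Fin 9)) :
    prodE es = (es.map (fun p => MvPolynomial.X p.1 - MvPolynomial.X p.2)).prod := by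
  induction es with
  | nil => rfl
  | cons ab t ih =>
    obtain ⟨a, b⟩ := ab
    rw [prodE, ih, List.map_cons, List.prod_cons]

end CNDP


open MvPolynomial

/-- If `|S2| ≥ 6` and `|S_i| ≥ 5` for `i ≠ 2`, then one can choose `s_i ∈ S_i`
with `P(s_1, …, s_9) ≠ 0`. -/
theorem exists_nonzero_eval_P {F : Type*} [Field F] [CharZero F]
    (S : Fin 9 → Finset F) (hS2 : 6 ≤ (S 1).card)
    (hS : ∀ i : Fin 9, i ≠ 1 → 5 ≤ (S i).card) :
    ∃ s : Fin 9 → F, (∀ i, s i ∈ S i) ∧ MvPolynomial.eval s (P F) ≠ 0 := by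
  classical
  set t : Fin 9 → ℕ := CNDP.fV CNDP.bxL with ht
  have hset : Finset.univ.filter
      (fun p : Fin 9 × Fin 9 => p.1 < p.2 ∧ p ∉ excludedPairs) = CNDP.edgesL.toFinset := by
    decide
  have hnodup : CNDP.edgesL.Nodup := by decide
  have hPZ : P F = MvPolynomial.map (Int.castRingHom F) (CNDP.prodE CNDP.edgesL) := by
    rw [P, hset, List.prod_toFinset _ hnodup, CNDP.prodE_eq,
      map_list_prod (MvPolynomial.map (Int.castRingHom F)), List.map_map]
    congr 1
    refine List.map_congr_left fun p hp => ?_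
    show (X p.1 - X p.2 : MvPolynomial (Fin 9) F)
      = MvPolynomial.map (Int.castRingHom F) (MvPolynomial.X p.1 - MvPolynomial.X p.2)
    rw [map_sub, MvPolynomial.map_X, MvPolynomial.map_X]
  have hcoeffF : MvPolynomial.coeff (CNDP.toF CNDP.bxL) (P F) = ((-6 : ℤ) : F) := by
    rw [hPZ, MvPolynomial.coeff_map, CNDP.coeff_compute]
    rfl
  have hne : MvPolynomial.coeff (Finsupp.equivFunOnFinite.symm t) (P F) ≠ 0 := by
    show MvPolynomial.coeff (CNDP.toF CNDP.bxL) (P F) ≠ 0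
    rw [hcoeffF]
    exact_mod_cast (by norm_num : (-6 : ℤ) ≠ 0)
  have hdeg : (P F).totalDegree ≤ ∑ i, t i := by
    have h32 : (∑ i, t i) = 32 := by decide
    rw [h32, P]
    refine le_trans (MvPolynomial.totalDegree_finset_prod _ _) ?_
    have hcard32 : (Finset.univ.filter
        (fun p : Fin 9 × Fin 9 => p.1 < p.2 ∧ p ∉ excludedPairs)).card = 32 := by decide
    calc ∑ p ∈ Finset.univ.filter
          (fun p : Fin 9 × Fin 9 => p.1 < p.2 ∧ p ∉ excludedPairs),
            (X p.1 - X p.2 : MvPolynomial (Fin 9) F).totalDegree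
        ≤ ∑ _p ∈ Finset.univ.filter
          (fun p : Fin 9 × Fin 9 => p.1 < p.2 ∧ p ∉ excludedPairs), 1 := by
          refine Finset.sum_le_sum fun p _ => ?_
          rw [sub_eq_add_neg]
          refine le_trans (MvPolynomial.totalDegree_add _ _) ?_
          rw [MvPolynomial.totalDegree_neg, MvPolynomial.totalDegree_X,
            MvPolynomial.totalDegree_X]
          simp
      _ = 32 := by rw [Finset.sum_const, smul_eq_mul, mul_one, hcard32]
  have hcard : ∀ i, t i + 1 ≤ (S i).card := by
    intro i
    by_cases h1 : i = 1
    · subst h1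
      exact le_trans (by decide) hS2
    · refine le_trans ?_ (hS i h1)
      have hall : ∀ j : Fin 9, j ≠ 1 → t j + 1 ≤ 5 := by decide
      exact hall i h1
  exact cn_exists (P F) t S hcard hdeg hne
end

section
/- (Combinatorial Nullstellensatz) Let F be a field and P ∈ F[x1,…,xn] a polynomial of total degree k1 + k2 + ⋯ + kn, where the k_i are non-negative integers and the coefficient of x1^{k1}⋯xn^{kn} in P is nonzero. If S1,…,Sn ⊆ F are finite sets with |S_i| > k_i for each i, then there exist s_i ∈ S_i with P(s1,…,sn) ≠ 0. -/
/-- Combinatorial Nullstellensatz (Alon): if `deg P = Σ k_i`, the coefficient of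
`x_1^{k_1} ⋯ x_n^{k_n}` in `P` is nonzero, and `|S_i| > k_i`, then `P` does not
vanish on `S_1 × ⋯ × S_n`. -/
theorem combinatorial_nullstellensatz {F : Type*} [Field F] {n : ℕ}
    (P : MvPolynomial (Fin n) F) (k : Fin n → ℕ)
    (hdeg : P.totalDegree = ∑ i, k i)
    (hcoeff : MvPolynomial.coeff (Finsupp.equivFunOnFinite.symm k) P ≠ 0)
    (S : Fin n → Finset F) (hS : ∀ i, k i < (S i).card) :
    ∃ s : Fin n → F, (∀ i, s i ∈ S i) ∧ MvPolynomial.eval s P ≠ 0 := by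
  refine MvPolynomial.combinatorial_nullstellensatz_exists_eval_nonzero P _ hcoeff ?_ S hS
  rw [hdeg, Finsupp.degree_eq_sum]
  rfl
end
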